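/- arXiv:2502.12585 — 7 statements merged into one kernel-verified Lean document; each statement's English description precedes it below -/
import Mathlib

section
/- A point x of a dynamical system (X, T, π) is asymptotically τ-periodic (i.e., there exists a τ-periodic point p with ρ(π(t,x), π(t,p)) → 0 as t → +∞) if and only if the sequence {π(kτ, x)}_{k=0}^∞ converges in X. -/
/-!
Writing `π (k τ) = (π τ)^[k]`, a limit of `π (k τ) x` is a fixed point of the continuous map
`π τ`, i.e. a `τ`-periodic point `l`; conversely `π (k τ) p = p` for such a point, so along the
times `k τ` the two notions agree. To pass from the times `k τ` to all times `t = s + k τ` with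
`s ∈ [0, τ]`, note that `y ↦ (s ↦ π s y)` is continuous into `C([0, τ], X)` with its sup metric,
so `π s (π (k τ) x)` tends to `π s l` uniformly in `s ∈ [0, τ]`.
-/

open Filter Topology Function Set

lemma sub_natFloor_div_mul_mem_Icc {τ t : ℝ} (hτ : 0 < τ) (ht : 0 ≤ t) :
    t - ⌊t / τ⌋₊ * τ ∈ Icc 0 τ := by
  have hle : (⌊t / τ⌋₊ : ℝ) * τ ≤ t := (le_div_iff₀ hτ).1 (Nat.floor_le (by positivity))
  have hlt : t < (⌊t / τ⌋₊ + 1) * τ := (div_lt_iff₀ hτ).1 (Nat.lt_floor_add_one _)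
  constructor <;> linarith

section Flow

variable {X : Type*} {π : ℝ → X → X}

lemma flow_natCast_mul_eq_iterate (hπ0 : ∀ x, π 0 x = x)
    (hπadd : ∀ t s x, π (t + s) x = π t (π s x)) (τ : ℝ) (x : X) (k : ℕ) :
    π (k * τ) x = (π τ)^[k] x := by
  induction k with
  | zero => simpa using hπ0 x
  | succ k ih => rw [iterate_succ_apply', ← ih, ← hπadd, Nat.cast_succ, add_one_mul, add_comm]

lemma flow_add_natCast_mul_of_isFixedPt (hπ0 : ∀ x, π 0 x = x)
    (hπadd : ∀ t s x, π (t + s) x = π t (π s x)) {τ : ℝ} {p : X} (hp : IsFixedPt (π τ) p)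
    (t : ℝ) (k : ℕ) : π (t + k * τ) p = π t p := by
  rw [hπadd, flow_natCast_mul_eq_iterate hπ0 hπadd, hp.iterate k]

variable [MetricSpace X]

lemma tendsto_flow_natCast_mul_of_tendsto_dist (hπ0 : ∀ x, π 0 x = x)
    (hπadd : ∀ t s x, π (t + s) x = π t (π s x)) {τ : ℝ} (hτ : 0 < τ) {x p : X}
    (hp : IsFixedPt (π τ) p) (hd : Tendsto (fun t => dist (π t x) (π t p)) atTop (𝓝 0)) :
    Tendsto (fun k : ℕ => π (k * τ) x) atTop (𝓝 p) := by
  have hkτ : Tendsto (fun k : ℕ => (k : ℝ) * τ) atTop atTop :=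
    tendsto_natCast_atTop_atTop.atTop_mul_const hτ
  refine tendsto_iff_dist_tendsto_zero.2 ((hd.comp hkτ).congr fun k => ?_)
  rw [comp_apply, flow_natCast_mul_eq_iterate hπ0 hπadd τ p, hp.iterate k]

variable (hcont : Continuous fun q : ℝ × X => π q.1 q.2)
include hcont

lemma isFixedPt_of_tendsto_flow_natCast_mul (hπ0 : ∀ x, π 0 x = x)
    (hπadd : ∀ t s x, π (t + s) x = π t (π s x)) {τ : ℝ} {x l : X}
    (hl : Tendsto (fun k : ℕ => π (k * τ) x) atTop (𝓝 l)) : IsFixedPt (π τ) l := by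
  simp only [flow_natCast_mul_eq_iterate hπ0 hπadd] at hl
  exact isFixedPt_of_tendsto_iterate hl (hcont.comp (Continuous.prodMk_right τ)).continuousAt

lemma tendsto_dist_flow_of_tendsto_flow_natCast_mul (hπ0 : ∀ x, π 0 x = x)
    (hπadd : ∀ t s x, π (t + s) x = π t (π s x)) {τ : ℝ} (hτ : 0 < τ) {x l : X}
    (hl : Tendsto (fun k : ℕ => π (k * τ) x) atTop (𝓝 l)) :
    Tendsto (fun t => dist (π t x) (π t l)) atTop (𝓝 0) := by
  have hper := isFixedPt_of_tendsto_flow_natCast_mul hcont hπ0 hπadd hl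
  let F : C(X, C(Icc 0 τ, X)) := ContinuousMap.curry
    ⟨fun q => π q.2 q.1, hcont.comp ((continuous_subtype_val.comp continuous_snd).prodMk continuous_fst)⟩
  have hF : Tendsto (fun k : ℕ => dist (F (π (k * τ) x)) (F l)) atTop (𝓝 0) :=
    tendsto_iff_dist_tendsto_zero.1 ((F.continuous.tendsto l).comp hl)
  have hfloor : Tendsto (fun t : ℝ => ⌊t / τ⌋₊) atTop atTop :=
    tendsto_nat_floor_atTop.comp (tendsto_id.atTop_div_const hτ)
  refine squeeze_zero' (.of_forall fun _ => dist_nonneg) ?_ (hF.comp hfloor)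
  filter_upwards [eventually_ge_atTop 0] with t ht
  set k := ⌊t / τ⌋₊
  set s : Icc (0 : ℝ) τ := ⟨_, sub_natFloor_div_mul_mem_Icc hτ ht⟩
  have hts : t = s + k * τ := (sub_add_cancel t _).symm
  calc dist (π t x) (π t l) = dist (F (π (k * τ) x) s) (F l s) := by
        rw [hts, hπadd, flow_add_natCast_mul_of_isFixedPt hπ0 hπadd hper]; rfl
    _ ≤ _ := ContinuousMap.dist_apply_le_dist s

end Flow

theorem stmt0_general {X : Type*} [MetricSpace X]
    (π : ℝ → X → X)
    (hcont : Continuous fun p : ℝ × X => π p.1 p.2)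
    (hπ0 : ∀ x : X, π 0 x = x)
    (hπadd : ∀ t s : ℝ, ∀ x : X, π (t + s) x = π t (π s x))
    (x : X) (τ : ℝ) (hτ : 0 < τ) :
    (∃ p : X, π τ p = p ∧
        Tendsto (fun t : ℝ => dist (π t x) (π t p)) atTop (nhds 0)) ↔
      ∃ l : X, Tendsto (fun k : ℕ => π ((k : ℝ) * τ) x) atTop (nhds l) := by
  constructor
  · rintro ⟨p, hp, hd⟩
    exact ⟨p, tendsto_flow_natCast_mul_of_tendsto_dist hπ0 hπadd hτ hp hd⟩
  · rintro ⟨l, hl⟩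
    exact ⟨l, isFixedPt_of_tendsto_flow_natCast_mul hcont hπ0 hπadd hl,
      tendsto_dist_flow_of_tendsto_flow_natCast_mul hcont hπ0 hπadd hτ hl⟩

/-- A point `x` of a dynamical system `(X, π)` (on a complete metric space) is
asymptotically `τ`-periodic iff the sequence `π (k τ) x` converges. -/
theorem stmt0 {X : Type*} [MetricSpace X] [CompleteSpace X]
    (π : ℝ → X → X)
    (hcont : Continuous fun p : ℝ × X => π p.1 p.2)
    (hπ0 : ∀ x : X, π 0 x = x)
    (hπadd : ∀ t s : ℝ, ∀ x : X, π (t + s) x = π t (π s x))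
    (x : X) (τ : ℝ) (hτ : 0 < τ) :
    (∃ p : X, π τ p = p ∧
        Tendsto (fun t : ℝ => dist (π t x) (π t p)) atTop (nhds 0)) ↔
      ∃ l : X, Tendsto (fun k : ℕ => π ((k : ℝ) * τ) x) atTop (nhds l) :=
  stmt0_general π hcont hπ0 hπadd x τ hτ
end

section
/- Let x be a positively Lagrange stable point of a dynamical system (X, T, π) and τ > 0. Then the motion π(t,x) is remotely τ-periodic (i.e., ρ(π(t+τ,x), π(t,x)) → 0 as t → +∞) if and only if every point p in the ω-limit set ω_x of x is τ-periodic. -/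
/-!
Both sides are statements about the continuous function `q ↦ dist (π τ q) q` along the
motion, since `π (t + τ) x = π τ (π t x)`. Remote `τ`-periodicity says this function tends to
`0` along the motion, and `τ`-periodicity of all ω-limit points says it vanishes on `ω_x`.
Continuity gives one implication; for the other, Lagrange stability lets every sequence of times
`tₙ → ∞` be refined to one along which the motion converges to a point of `ω_x`.
-/

open Filter Topology

def IsSeqOmegaLimit {X : Type*} [TopologicalSpace X] (u : ℝ → X) (p : X) : Prop :=
  ∃ tn : ℕ → ℝ, Tendsto tn atTop atTop ∧ Tendsto (u ∘ tn) atTop (𝓝 p)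

section OmegaLimit

variable {X Y : Type*} [TopologicalSpace X] [TopologicalSpace Y] {u : ℝ → X} {h : X → Y} {y : Y}

theorem IsSeqOmegaLimit.eq_of_tendsto_comp [T2Space Y] {p : X} (hp : IsSeqOmegaLimit u p)
    (hh : ContinuousAt h p) (hlim : Tendsto (h ∘ u) atTop (𝓝 y)) : h p = y := by
  obtain ⟨tn, htn, hconv⟩ := hp
  exact tendsto_nhds_unique (hh.tendsto.comp hconv) (hlim.comp htn)

theorem exists_isSeqOmegaLimit_subseq [FirstCountableTopology X]
    (hK : IsCompact (closure (u '' Set.Ici 0))) {tn : ℕ → ℝ} (htn : Tendsto tn atTop atTop) :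
    ∃ p, IsSeqOmegaLimit u p ∧ ∃ φ : ℕ → ℕ, StrictMono φ ∧ Tendsto (u ∘ tn ∘ φ) atTop (𝓝 p) := by
  have hmem : ∀ᶠ n in atTop, (u ∘ tn) n ∈ closure (u '' Set.Ici 0) :=
    (htn.eventually_ge_atTop 0).mono fun n hn => subset_closure ⟨tn n, hn, rfl⟩
  obtain ⟨p, -, φ, hφ, hconv⟩ := hK.tendsto_subseq' hmem.frequently
  exact ⟨p, ⟨tn ∘ φ, htn.comp hφ.tendsto_atTop, hconv⟩, φ, hφ, hconv⟩

theorem tendsto_comp_of_forall_isSeqOmegaLimit [FirstCountableTopology X]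
    (hK : IsCompact (closure (u '' Set.Ici 0))) (hh : Continuous h)
    (hω : ∀ p, IsSeqOmegaLimit u p → h p = y) : Tendsto (h ∘ u) atTop (𝓝 y) := by
  refine tendsto_of_subseq_tendsto fun tn htn => ?_
  obtain ⟨p, hp, φ, -, hconv⟩ := exists_isSeqOmegaLimit_subseq hK htn
  exact ⟨φ, hω p hp ▸ (hh.tendsto p).comp hconv⟩

theorem tendsto_comp_atTop_iff_forall_isSeqOmegaLimit [FirstCountableTopology X] [T2Space Y]
    (hK : IsCompact (closure (u '' Set.Ici 0))) (hh : Continuous h) :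
    Tendsto (h ∘ u) atTop (𝓝 y) ↔ ∀ p, IsSeqOmegaLimit u p → h p = y :=
  ⟨fun hlim _ hp => hp.eq_of_tendsto_comp hh.continuousAt hlim,
    tendsto_comp_of_forall_isSeqOmegaLimit hK hh⟩

end OmegaLimit

theorem stmt1_general {X : Type*} [MetricSpace X]
    (π : ℝ → X → X)
    (hcont : Continuous fun p : ℝ × X => π p.1 p.2)
    (hπadd : ∀ t s : ℝ, ∀ x : X, π (t + s) x = π t (π s x))
    (x : X)
    (hLS : IsCompact (closure ((fun t : ℝ => π t x) '' Set.Ici 0)))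
    (τ : ℝ) :
    Tendsto (fun t : ℝ => dist (π (t + τ) x) (π t x)) atTop (nhds 0) ↔
      ∀ p : X,
        (∃ tn : ℕ → ℝ, Tendsto tn atTop atTop ∧
            Tendsto (fun n => π (tn n) x) atTop (nhds p)) →
        π τ p = p := by
  have hdisp : Continuous fun q => dist (π τ q) q :=
    (hcont.comp (continuous_const.prodMk continuous_id)).dist continuous_id
  have hmotion : (fun t => dist (π (t + τ) x) (π t x)) =
      (fun q => dist (π τ q) q) ∘ fun t => π t x := by
    ext t
    simp only [Function.comp_apply, add_comm t, hπadd]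
  rw [hmotion, tendsto_comp_atTop_iff_forall_isSeqOmegaLimit hLS hdisp]
  simp only [dist_eq_zero]
  rfl

/-- For a positively Lagrange stable point `x`, the motion is remotely `τ`-periodic
iff every point of the ω-limit set of `x` is `τ`-periodic. -/
theorem stmt1 {X : Type*} [MetricSpace X] [CompleteSpace X]
    (π : ℝ → X → X)
    (hcont : Continuous fun p : ℝ × X => π p.1 p.2)
    (hπ0 : ∀ x : X, π 0 x = x)
    (hπadd : ∀ t s : ℝ, ∀ x : X, π (t + s) x = π t (π s x))
    (x : X)
    (hLS : IsCompact (closure ((fun t : ℝ => π t x) '' Set.Ici 0)))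
    (τ : ℝ) (hτ : 0 < τ) :
    Tendsto (fun t : ℝ => dist (π (t + τ) x) (π t x)) atTop (nhds 0) ↔
      ∀ p : X,
        (∃ tn : ℕ → ℝ, Tendsto tn atTop atTop ∧
            Tendsto (fun n => π (tn n) x) atTop (nhds p)) →
        π τ p = p :=
  stmt1_general π hcont hπadd x hLS τ
end

section
/- Let x be a positively Lagrange stable point. Then the motion π(t,x) is remotely stationary (remotely τ-periodic for every τ > 0) if and only if every point of the ω-limit set ω_x is a stationary (fixed) point of the flow. -/
open Filter Topology

/-!
If the motion is remotely stationary and `π (tₙ) x → p` with `tₙ → ∞`, then `π (tₙ + τ) x`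
converges both to `π τ p` (continuity of `π τ`) and to `p` (the gap tends to zero), so `p` is
fixed. Conversely, by compactness of the forward orbit every sequence `tₙ → ∞` has a subsequence
along which `π (tₙ) x` converges to an ω-limit point `p`; as `p` is fixed, the gap
`dist (π (tₙ + τ) x) (π tₙ x)` tends to `dist (π τ p) p = 0` along it.
-/

section

variable {X : Type*} {π : ℝ → X → X}

theorem flow_apply_eq_self_of_forall_pos (hπ0 : ∀ x : X, π 0 x = x)
    (hπadd : ∀ t s : ℝ, ∀ x : X, π (t + s) x = π t (π s x)) {p : X}
    (hp : ∀ τ : ℝ, 0 < τ → π τ p = p) (t : ℝ) : π t p = p := by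
  rcases lt_trichotomy t 0 with ht | rfl | ht
  · calc π t p = π t (π (-t) p) := by rw [hp (-t) (neg_pos.mpr ht)]
      _ = p := by rw [← hπadd, add_neg_cancel, hπ0]
  · exact hπ0 p
  · exact hp t ht

theorem tendsto_flow_add [TopologicalSpace X]
    (hπadd : ∀ t s : ℝ, ∀ x : X, π (t + s) x = π t (π s x)) {τ : ℝ} (hτ : Continuous (π τ))
    {ι : Type*} {l : Filter ι} {t : ι → ℝ} {x p : X}
    (h : Tendsto (fun i => π (t i) x) l (𝓝 p)) :
    Tendsto (fun i => π (t i + τ) x) l (𝓝 (π τ p)) := by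
  simpa only [Function.comp_def, add_comm _ τ, hπadd] using (hτ.tendsto p).comp h

variable [MetricSpace X]

theorem flow_apply_eq_self_of_tendsto_dist
    (hπadd : ∀ t s : ℝ, ∀ x : X, π (t + s) x = π t (π s x)) {τ : ℝ} (hτ : Continuous (π τ))
    {x : X} (hrem : Tendsto (fun t : ℝ => dist (π (t + τ) x) (π t x)) atTop (𝓝 0))
    {ι : Type*} {l : Filter ι} [l.NeBot] {t : ι → ℝ} (ht : Tendsto t l atTop) {p : X}
    (hp : Tendsto (fun i => π (t i) x) l (𝓝 p)) : π τ p = p := by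
  have hgap : Tendsto (fun i => dist (π (t i) x) (π (t i + τ) x)) l (𝓝 0) := by
    simpa only [Function.comp_def, dist_comm] using hrem.comp ht
  exact tendsto_nhds_unique (tendsto_flow_add hπadd hτ hp) (hp.congr_dist hgap)

theorem tendsto_dist_flow_add_of_forall_omegaLimit
    (hπadd : ∀ t s : ℝ, ∀ x : X, π (t + s) x = π t (π s x)) {τ : ℝ} (hτ : Continuous (π τ))
    {x : X} (hLS : IsCompact (closure ((fun t : ℝ => π t x) '' Set.Ici 0)))
    (hfix : ∀ p : X, (∃ tn : ℕ → ℝ, Tendsto tn atTop atTop ∧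
        Tendsto (fun n => π (tn n) x) atTop (𝓝 p)) → π τ p = p) :
    Tendsto (fun t : ℝ => dist (π (t + τ) x) (π t x)) atTop (𝓝 0) := by
  refine tendsto_of_subseq_tendsto fun tn htn => ?_
  have hmem : ∃ᶠ n in atTop, π (tn n) x ∈ closure ((fun t : ℝ => π t x) '' Set.Ici 0) :=
    (htn.eventually_ge_atTop 0).frequently.mono fun n hn => subset_closure ⟨tn n, hn, rfl⟩
  obtain ⟨p, -, φ, hφ, hp⟩ := hLS.tendsto_subseq' hmem
  have hpfix : π τ p = p := hfix p ⟨tn ∘ φ, htn.comp hφ.tendsto_atTop, hp⟩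
  refine ⟨φ, ?_⟩
  simpa only [Function.comp_def, hpfix, dist_self] using (tendsto_flow_add hπadd hτ hp).dist hp

end

theorem stmt2_general {X : Type*} [MetricSpace X]
    (π : ℝ → X → X)
    (hcont : Continuous fun p : ℝ × X => π p.1 p.2)
    (hπ0 : ∀ x : X, π 0 x = x)
    (hπadd : ∀ t s : ℝ, ∀ x : X, π (t + s) x = π t (π s x))
    (x : X)
    (hLS : IsCompact (closure ((fun t : ℝ => π t x) '' Set.Ici 0))) :
    (∀ τ : ℝ, 0 < τ →
        Tendsto (fun t : ℝ => dist (π (t + τ) x) (π t x)) atTop (nhds 0)) ↔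
      ∀ p : X,
        (∃ tn : ℕ → ℝ, Tendsto tn atTop atTop ∧
            Tendsto (fun n => π (tn n) x) atTop (nhds p)) →
        ∀ t : ℝ, π t p = p := by
  have hπc : ∀ τ : ℝ, Continuous (π τ) := fun τ =>
    hcont.comp (continuous_const.prodMk continuous_id)
  constructor
  · rintro hrem p ⟨tn, htn, hp⟩
    exact flow_apply_eq_self_of_forall_pos hπ0 hπadd fun τ hτ =>
      flow_apply_eq_self_of_tendsto_dist hπadd (hπc τ) (hrem τ hτ) htn hp
  · intro hfix τ _
    exact tendsto_dist_flow_add_of_forall_omegaLimit hπadd (hπc τ) hLS fun p hp => hfix p hp τ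

/-- For a positively Lagrange stable point `x`, the motion is remotely stationary
(remotely `τ`-periodic for every `τ > 0`) iff every point of the ω-limit set of `x`
is a stationary point. -/
theorem stmt2 {X : Type*} [MetricSpace X] [CompleteSpace X]
    (π : ℝ → X → X)
    (hcont : Continuous fun p : ℝ × X => π p.1 p.2)
    (hπ0 : ∀ x : X, π 0 x = x)
    (hπadd : ∀ t s : ℝ, ∀ x : X, π (t + s) x = π t (π s x))
    (x : X)
    (hLS : IsCompact (closure ((fun t : ℝ => π t x) '' Set.Ici 0))) :
    (∀ τ : ℝ, 0 < τ →
        Tendsto (fun t : ℝ => dist (π (t + τ) x) (π t x)) atTop (nhds 0)) ↔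
      ∀ p : X,
        (∃ tn : ℕ → ℝ, Tendsto tn atTop atTop ∧
            Tendsto (fun n => π (tn n) x) atTop (nhds p)) →
        ∀ t : ℝ, π t p = p :=
  stmt2_general π hcont hπ0 hπadd x hLS
end

section
/- Let φ ∈ C(T, X) and τ > 0. Then lim_{t→+∞} ρ(φ(t+τ), φ(t)) = 0 if and only if lim_{t→+∞} β(σ(t+τ, φ), σ(t, φ)) = 0, where σ(h, φ) is the h-translate of φ and β is the metric of uniform convergence on compact sets on C(T, X). -/
open Filter

theorem Filter.Eventually.forall_add_of_bddBelow {α : Type*} [AddCommGroup α] [LinearOrder α]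
    [IsOrderedAddMonoid α] {p : α → Prop} (hp : ∀ᶠ u in atTop, p u) {K : Set α}
    (hK : BddBelow K) : ∀ᶠ t in atTop, ∀ s ∈ K, p (s + t) := by
  obtain ⟨m, hm⟩ := hK
  obtain ⟨N, hN⟩ := eventually_atTop.1 hp
  filter_upwards [eventually_ge_atTop (N - m)] with t ht s hs
  exact hN _ (add_sub_cancel m N ▸ add_le_add (hm hs) ht)

theorem Filter.eventually_atTop_iff_forall_isCompact_eventually_add {α : Type*} [AddCommGroup α]
    [LinearOrder α] [IsOrderedAddMonoid α] [TopologicalSpace α] [ClosedIicTopology α]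
    {p : α → Prop} :
    (∀ᶠ u in atTop, p u) ↔ ∀ K : Set α, IsCompact K → ∀ᶠ t in atTop, ∀ s ∈ K, p (s + t) := by
  refine ⟨fun hp K hK => hp.forall_add_of_bddBelow hK.bddBelow, fun h => ?_⟩
  simpa using h {0} isCompact_singleton

theorem stmt6_general {X : Type*} [MetricSpace X]
    (φ : C(ℝ, X)) (τ : ℝ) :
    Tendsto (fun t : ℝ => dist (φ (t + τ)) (φ t)) atTop (nhds 0) ↔
      ∀ ε > (0 : ℝ), ∀ K : Set ℝ, IsCompact K →
        ∀ᶠ t : ℝ in atTop, ∀ s ∈ K,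
          dist (φ (s + t + τ)) (φ (s + t)) < ε := by
  simp only [Metric.tendsto_nhds, Real.dist_0_eq_abs, abs_dist]
  exact forall₂_congr fun ε _ => eventually_atTop_iff_forall_isCompact_eventually_add

/-- `dist (φ (t+τ), φ t) → 0` as `t → +∞` iff the translates `σ(t+τ, φ)` and
`σ(t, φ)` become uniformly close on every compact set as `t → +∞` (i.e. the
distance in the compact-open metric `β` tends to `0`). -/
theorem stmt6 {X : Type*} [MetricSpace X] [CompleteSpace X]
    (φ : C(ℝ, X)) (τ : ℝ) (hτ : 0 < τ) :
    Tendsto (fun t : ℝ => dist (φ (t + τ)) (φ t)) atTop (nhds 0) ↔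
      ∀ ε > (0 : ℝ), ∀ K : Set ℝ, IsCompact K →
        ∀ᶠ t : ℝ in atTop, ∀ s ∈ K,
          dist (φ (s + t + τ)) (φ (s + t)) < ε :=
  stmt6_general φ τ
end

section
/- Let φ ∈ C(T, X) be Lagrange stable. Then φ is remotely τ-periodic (lim_{t→+∞} ρ(φ(t+τ), φ(t)) = 0) if and only if every function in the ω-limit set ω_φ of φ under the shift dynamical system is τ-periodic. -/
/-!
Evaluation at a point is continuous on `C(ℝ, X)`, so if the translates `φ(· + tₙ)` converge
to `ψ`, then `dist (ψ (s + τ)) (ψ s)` is the limit of `dist (φ (s + tₙ + τ)) (φ (s + tₙ))`.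
This gives the forward direction at once. Conversely, if `φ` is not remotely `τ`-periodic,
some `tₙ → ∞` keeps `dist (φ (tₙ + τ)) (φ tₙ) ≥ ε`; Lagrange stability extracts a convergent
subsequence of translates, and its limit `ψ` has `dist (ψ τ) (ψ 0) ≥ ε`.
-/

open Filter Topology

noncomputable def translate7 {X : Type*} [MetricSpace X] (φ : C(ℝ, X)) (h : ℝ) :
    C(ℝ, X) :=
  φ.comp ⟨fun t => t + h, by continuity⟩

section

variable {X : Type*} [MetricSpace X]

@[simp]
theorem translate7_apply (φ : C(ℝ, X)) (h t : ℝ) : translate7 φ h t = φ (t + h) := rfl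

theorem tendsto_dist_of_tendsto_translate7 {ι : Type*} {l : Filter ι} {φ ψ : C(ℝ, X)}
    {h : ι → ℝ} (hψ : Tendsto (fun i => translate7 φ (h i)) l (𝓝 ψ)) (s τ : ℝ) :
    Tendsto (fun i => dist (φ (s + h i + τ)) (φ (s + h i))) l (𝓝 (dist (ψ (s + τ)) (ψ s))) := by
  have := (((continuous_eval_const (s + τ)).tendsto ψ).comp hψ).dist
    (((continuous_eval_const s).tendsto ψ).comp hψ)
  simpa only [Function.comp_def, translate7_apply, add_right_comm s τ] using this

theorem periodic_of_tendsto_translate7 {ι : Type*} {l : Filter ι} [l.NeBot] {φ ψ : C(ℝ, X)}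
    {τ : ℝ} (hφ : Tendsto (fun t => dist (φ (t + τ)) (φ t)) atTop (𝓝 0)) {h : ι → ℝ}
    (hh : Tendsto h l atTop) (hψ : Tendsto (fun i => translate7 φ (h i)) l (𝓝 ψ)) :
    Function.Periodic ψ τ := fun s =>
  dist_eq_zero.mp <| tendsto_nhds_unique (tendsto_dist_of_tendsto_translate7 hψ s τ)
    (hφ.comp (tendsto_atTop_add_const_left _ s hh))

theorem exists_seq_tendsto_atTop_le_of_not_tendsto_zero {f : ℝ → ℝ} (hf : ∀ t, 0 ≤ f t)
    (hnot : ¬Tendsto f atTop (𝓝 0)) :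
    ∃ ε > 0, ∃ tn : ℕ → ℝ, Tendsto tn atTop atTop ∧ ∀ n, ε ≤ f (tn n) := by
  rw [Metric.tendsto_nhds] at hnot
  push Not at hnot
  obtain ⟨ε, hε, hfreq⟩ := hnot
  simp only [Real.dist_0_eq_abs, abs_of_nonneg (hf _)] at hfreq
  exact ⟨ε, hε, frequently_iff_seq_forall.mp hfreq⟩

theorem tendsto_dist_of_forall_periodic {φ : C(ℝ, X)}
    (hLS : IsCompact (closure {ψ : C(ℝ, X) | ∃ h : ℝ, ψ = translate7 φ h})) {τ : ℝ}
    (H : ∀ ψ : C(ℝ, X), (∃ tn : ℕ → ℝ, Tendsto tn atTop atTop ∧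
      Tendsto (fun n => translate7 φ (tn n)) atTop (𝓝 ψ)) → Function.Periodic ψ τ) :
    Tendsto (fun t => dist (φ (t + τ)) (φ t)) atTop (𝓝 0) := by
  by_contra hnot
  obtain ⟨ε, hε, tn, htn, hε_le⟩ :=
    exists_seq_tendsto_atTop_le_of_not_tendsto_zero (fun _ => dist_nonneg) hnot
  obtain ⟨ψ, -, θ, hθ, hψ⟩ := hLS.isSeqCompact fun n => subset_closure ⟨tn n, rfl⟩
  have hper : ψ (0 + τ) = ψ 0 := H ψ ⟨tn ∘ θ, htn.comp hθ.tendsto_atTop, hψ⟩ 0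
  have hlim : ε ≤ dist (ψ (0 + τ)) (ψ 0) :=
    ge_of_tendsto (tendsto_dist_of_tendsto_translate7 hψ 0 τ)
      (Eventually.of_forall fun k => by simpa only [zero_add] using hε_le (θ k))
  rw [hper, dist_self] at hlim
  exact hlim.not_gt hε

end

theorem stmt7_general {X : Type*} [MetricSpace X]
    (φ : C(ℝ, X))
    (hLS : IsCompact (closure {ψ : C(ℝ, X) | ∃ h : ℝ, ψ = translate7 φ h}))
    (τ : ℝ) :
    Tendsto (fun t : ℝ => dist (φ (t + τ)) (φ t)) atTop (nhds 0) ↔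
      ∀ ψ : C(ℝ, X),
        (∃ tn : ℕ → ℝ, Tendsto tn atTop atTop ∧
            Tendsto (fun n => translate7 φ (tn n)) atTop (nhds ψ)) →
        ∀ t : ℝ, ψ (t + τ) = ψ t :=
  ⟨fun hφ _ ⟨_, htn, hψ⟩ => periodic_of_tendsto_translate7 hφ htn hψ,
    tendsto_dist_of_forall_periodic hLS⟩

/-- A Lagrange stable `φ ∈ C(ℝ, X)` is remotely `τ`-periodic iff every function in
its ω-limit set under the shift dynamical system is `τ`-periodic. -/
theorem stmt7 {X : Type*} [MetricSpace X] [CompleteSpace X]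
    (φ : C(ℝ, X))
    (hLS : IsCompact (closure {ψ : C(ℝ, X) | ∃ h : ℝ, ψ = translate7 φ h}))
    (τ : ℝ) (hτ : 0 < τ) :
    Tendsto (fun t : ℝ => dist (φ (t + τ)) (φ t)) atTop (nhds 0) ↔
      ∀ ψ : C(ℝ, X),
        (∃ tn : ℕ → ℝ, Tendsto tn atTop atTop ∧
            Tendsto (fun n => translate7 φ (tn n)) atTop (nhds ψ)) →
        ∀ t : ℝ, ψ (t + τ) = ψ t :=
  stmt7_general φ hLS τ
end

section
/- If the equation x' = A(t)x has an exponential trichotomy on ℝ with trichotomy constants N, ν, then for every bounded continuous f : ℝ → B, the function φ(t) := ∫_{−∞}^{+∞} G(t,τ) f(τ) dτ (with G the trichotomy Green function) is a bounded solution of x' = A(t)x + f(t) satisfying ‖φ‖_∞ ≤ (2N/ν)‖f‖_∞. -/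
open Real MeasureTheory

/-- The Green function of an equation `x' = A(t)x` with exponential trichotomy on
`ℝ`, with Cauchy operator `U`, inverse `V` and trichotomy projections `P, Q`. -/
noncomputable def GreenT {E : Type*} [NormedAddCommGroup E] [NormedSpace ℝ E]
    (U V : ℝ → E →L[ℝ] E) (P Q : E →L[ℝ] E) (t τ : ℝ) : E →L[ℝ] E :=
  if 0 ≤ τ ∧ τ < t then U t ∘L P ∘L V τ
  else if t ≤ τ ∧ 0 ≤ τ then -(U t ∘L (1 - P) ∘L V τ)
  else if t ≤ τ ∧ τ ≤ 0 then -(U t ∘L Q ∘L V τ)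
  else U t ∘L (1 - Q) ∘L V τ

/-!
The kernel bound `‖G(t,τ)‖ ≤ N e^{-ν|t-τ|}` makes `φ(t)` converge absolutely, with
`‖φ(t)‖ ≤ N ‖f‖ ∫ e^{-ν|t-τ|} dτ = 2N‖f‖/ν`. For the equation, compare `G(t,τ)` with
`U(t) G(0,τ)`: since `P + (I - P) = I` and `Q + (I - Q) = I`, they agree unless `τ` lies
between `0` and `t`, where they differ by `±U(t)U(τ)⁻¹`. Hence
`φ(t) = U(t) (φ(0) + ∫₀ᵗ U(τ)⁻¹ f(τ) dτ)`, the variation of constants formula, which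
solves `x' = A(t)x + f(t)`. The product rule needs `U` differentiable in operator norm;
this follows from its strong differentiability through the Banach–Steinhaus theorem.
-/

open Set Filter intervalIntegral

section CauchyOperator

variable {E F : Type*} [NormedAddCommGroup E] [NormedSpace ℝ E]
  [NormedAddCommGroup F] [NormedSpace ℝ F]

theorem IsCompact.exists_bound_opNorm_of_continuous_apply [CompleteSpace E] {X : Type*}
    [TopologicalSpace X] {K : Set X} (hK : IsCompact K) {U : X → E →L[ℝ] F}
    (hU : ∀ x, Continuous fun s => U s x) : ∃ C, ∀ s ∈ K, ‖U s‖ ≤ C := by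
  obtain ⟨C, hC⟩ := banach_steinhaus (g := fun s : K => U s) fun x => by
    obtain ⟨C, hC⟩ := hK.exists_bound_of_continuousOn (hU x).continuousOn
    exact ⟨C, fun s => hC s s.2⟩
  exact ⟨C, fun s hs => hC ⟨s, hs⟩⟩

variable {A : ℝ → F →L[ℝ] F} {U : ℝ → E →L[ℝ] F}

theorem continuous_apply_of_hasDerivAt_apply
    (hU : ∀ x t, HasDerivAt (fun s => U s x) (A t (U t x)) t) (x : E) :
    Continuous fun s => U s x :=
  continuous_iff_continuousAt.2 fun t => (hU x t).continuousAt

theorem integral_of_hasDerivAt_apply [CompleteSpace F] (hA : Continuous A)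
    (hU : ∀ x t, HasDerivAt (fun s => U s x) (A t (U t x)) t) (x : E) (r s : ℝ) :
    ∫ q in r..s, A q (U q x) = U s x - U r x :=
  integral_eq_sub_of_hasDerivAt (fun q _ => hU x q)
    ((hA.clm_apply (continuous_apply_of_hasDerivAt_apply hU x)).intervalIntegrable _ _)

theorem continuous_of_hasDerivAt_apply [CompleteSpace E] [CompleteSpace F] (hA : Continuous A)
    (hU : ∀ x t, HasDerivAt (fun s => U s x) (A t (U t x)) t) : Continuous U := by
  refine continuous_iff_continuousAt.2 fun t => ?_
  set I := Icc (t - 1) (t + 1)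
  obtain ⟨C, hC⟩ := isCompact_Icc.exists_bound_opNorm_of_continuous_apply (K := I)
    (continuous_apply_of_hasDerivAt_apply hU)
  obtain ⟨K, hK⟩ := isCompact_Icc.exists_bound_of_continuousOn (s := I) hA.continuousOn
  have htI : t ∈ I := ⟨by linarith, by linarith⟩
  have hC0 : 0 ≤ C := (norm_nonneg _).trans (hC t htI)
  have hK0 : 0 ≤ K := (norm_nonneg _).trans (hK t htI)
  have hlip : LipschitzOnWith (K * C).toNNReal U I := by
    refine LipschitzOnWith.of_dist_le' fun s hs r hr => ?_
    rw [dist_eq_norm, dist_eq_norm]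
    refine ContinuousLinearMap.opNorm_le_bound _ (by positivity) fun x => ?_
    rw [sub_apply, ← integral_of_hasDerivAt_apply hA hU, Real.norm_eq_abs]
    calc ‖∫ q in r..s, A q (U q x)‖ ≤ K * C * ‖x‖ * |s - r| := by
          refine norm_integral_le_of_norm_le_const fun q hq => ?_
          have hqI : q ∈ I := uIcc_subset_Icc hr hs (uIoc_subset_uIcc hq)
          calc ‖A q (U q x)‖ ≤ K * ‖U q x‖ := (A q).le_of_opNorm_le (hK q hqI) _
            _ ≤ K * (C * ‖x‖) := by gcongr; exact (U q).le_of_opNorm_le (hC q hqI) x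
            _ = K * C * ‖x‖ := by ring
      _ = K * C * |s - r| * ‖x‖ := by ring
  exact hlip.continuousOn.continuousAt (Icc_mem_nhds (by linarith) (by linarith))

theorem hasDerivAt_of_hasDerivAt_apply [CompleteSpace E] [CompleteSpace F] (hA : Continuous A)
    (hU : ∀ x t, HasDerivAt (fun s => U s x) (A t (U t x)) t) (t : ℝ) :
    HasDerivAt U (A t ∘L U t) t := by
  have hAU : Continuous fun s => A s ∘L U s :=
    hA.clm_comp (continuous_of_hasDerivAt_apply hA hU)
  have hrepr : ∀ s, U s = U 0 + ∫ r in 0..s, A r ∘L U r := fun s => by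
    ext x
    rw [add_apply, ContinuousLinearMap.intervalIntegral_apply (hAU.intervalIntegrable _ _)]
    simp only [ContinuousLinearMap.comp_apply]
    rw [integral_of_hasDerivAt_apply hA hU]
    abel
  exact ((hAU.integral_hasStrictDerivAt 0 t).hasDerivAt.const_add (U 0)).congr_of_eventuallyEq
    (Eventually.of_forall hrepr)

end CauchyOperator

theorem Continuous.inv_of_mul_eq_one {R X : Type*} [NormedRing R] [HasSummableGeomSeries R]
    [TopologicalSpace X] {u v : X → R} (hu : Continuous u) (huv : ∀ s, u s * v s = 1)
    (hvu : ∀ s, v s * u s = 1) : Continuous v := by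
  let w : X → Rˣ := fun s => ⟨u s, v s, huv s, hvu s⟩
  have hw : Continuous w := Units.isOpenEmbedding_val.isEmbedding.continuous_iff.2 hu
  exact Units.continuous_coe_inv.comp hw

section GreenFunction

variable {E : Type*} [NormedAddCommGroup E] [NormedSpace ℝ E] {U V : ℝ → E →L[ℝ] E}
  {P Q : E →L[ℝ] E} {t τ : ℝ}

theorem greenT_of_nonneg_of_lt (h0 : 0 ≤ τ) (ht : τ < t) :
    GreenT U V P Q t τ = U t ∘L P ∘L V τ :=
  if_pos ⟨h0, ht⟩

theorem greenT_of_le_of_nonneg (ht : t ≤ τ) (h0 : 0 ≤ τ) :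
    GreenT U V P Q t τ = -(U t ∘L (1 - P) ∘L V τ) := by
  rw [GreenT, if_neg fun h => h.2.not_ge ht, if_pos ⟨ht, h0⟩]

theorem greenT_of_le_of_neg (ht : t ≤ τ) (h0 : τ < 0) :
    GreenT U V P Q t τ = -(U t ∘L Q ∘L V τ) := by
  rw [GreenT, if_neg fun h => h.1.not_gt h0, if_neg fun h => h.2.not_gt h0, if_pos ⟨ht, h0.le⟩]

theorem greenT_of_lt_of_neg (ht : τ < t) (h0 : τ < 0) :
    GreenT U V P Q t τ = U t ∘L (1 - Q) ∘L V τ := by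
  rw [GreenT, if_neg fun h => h.1.not_gt h0, if_neg fun h => h.1.not_gt ht,
    if_neg fun h => h.1.not_gt ht]

theorem norm_greenT_le {N ν : ℝ}
    (h1 : ∀ t τ : ℝ, 0 ≤ τ → τ ≤ t → ‖U t ∘L P ∘L V τ‖ ≤ N * exp (-ν * (t - τ)))
    (h2 : ∀ t τ : ℝ, t ≤ τ → 0 ≤ τ → ‖U t ∘L (1 - P) ∘L V τ‖ ≤ N * exp (-ν * (τ - t)))
    (h3 : ∀ t τ : ℝ, t ≤ τ → τ ≤ 0 → ‖U t ∘L Q ∘L V τ‖ ≤ N * exp (-ν * (τ - t)))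
    (h4 : ∀ t τ : ℝ, τ ≤ t → τ ≤ 0 → ‖U t ∘L (1 - Q) ∘L V τ‖ ≤ N * exp (-ν * (t - τ)))
    (t τ : ℝ) : ‖GreenT U V P Q t τ‖ ≤ N * exp (-ν * |t - τ|) := by
  rcases le_or_gt 0 τ with h0 | h0 <;> rcases lt_or_ge τ t with ht | ht
  · rw [greenT_of_nonneg_of_lt h0 ht, abs_of_pos (sub_pos.2 ht)]
    exact h1 t τ h0 ht.le
  · rw [greenT_of_le_of_nonneg ht h0, norm_neg, abs_sub_comm, abs_of_nonneg (sub_nonneg.2 ht)]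
    exact h2 t τ ht h0
  · rw [greenT_of_lt_of_neg ht h0, abs_of_pos (sub_pos.2 ht)]
    exact h4 t τ ht.le h0.le
  · rw [greenT_of_le_of_neg ht h0, norm_neg, abs_sub_comm, abs_of_nonneg (sub_nonneg.2 ht)]
    exact h3 t τ ht h0.le

theorem stronglyMeasurable_greenT (hV : Continuous V) (t : ℝ) :
    StronglyMeasurable (GreenT U V P Q t) := by
  unfold GreenT
  refine .ite (by measurability) (Continuous.stronglyMeasurable (by fun_prop))
    (.ite (by measurability) (Continuous.stronglyMeasurable (by fun_prop))
      (.ite (by measurability) (Continuous.stronglyMeasurable (by fun_prop))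
        (Continuous.stronglyMeasurable (by fun_prop))))

theorem greenT_apply_eq_add_indicator (hU0 : U 0 = 1) (g : ℝ → E) (h0 : τ ≠ 0) (ht : τ ≠ t) :
    GreenT U V P Q t τ (g τ) = U t (GreenT U V P Q 0 τ (g τ)) +
      ((Ioc 0 t).indicator (fun τ => U t (V τ (g τ))) τ -
        (Ioc t 0).indicator (fun τ => U t (V τ (g τ))) τ) := by
  rcases h0.lt_or_gt with h0 | h0 <;> rcases ht.lt_or_gt with ht | ht
  · rw [greenT_of_lt_of_neg ht h0, greenT_of_lt_of_neg h0 h0,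
      indicator_of_notMem fun h => h0.not_gt h.1, indicator_of_notMem fun h => ht.not_gt h.1]
    simp [hU0]
  · rw [greenT_of_le_of_neg ht.le h0, greenT_of_lt_of_neg h0 h0,
      indicator_of_notMem fun h => h0.not_gt h.1,
      indicator_of_mem (show τ ∈ Ioc t 0 from ⟨ht, h0.le⟩)]
    simp only [hU0, ContinuousLinearMap.comp_apply,
      neg_apply, sub_apply, one_apply_eq_self, map_sub]
    abel
  · rw [greenT_of_nonneg_of_lt h0.le ht, greenT_of_le_of_nonneg h0.le h0.le,
      indicator_of_mem (show τ ∈ Ioc 0 t from ⟨h0, ht.le⟩),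
      indicator_of_notMem fun h => h.2.not_gt h0]
    simp [hU0]
  · rw [greenT_of_le_of_nonneg ht.le h0.le, greenT_of_le_of_nonneg h0.le h0.le,
      indicator_of_notMem fun h => h.2.not_gt ht, indicator_of_notMem fun h => h.2.not_gt h0]
    simp [hU0]

theorem integral_greenT_apply_eq [CompleteSpace E] (hU0 : U 0 = 1) {f : ℝ → E}
    (hVf : Continuous fun τ => V τ (f τ))
    (hint : ∀ t, Integrable fun τ => GreenT U V P Q t τ (f τ)) (t : ℝ) :
    ∫ τ, GreenT U V P Q t τ (f τ) =
      U t ((∫ τ, GreenT U V P Q 0 τ (f τ)) + ∫ τ in 0..t, V τ (f τ)) := by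
  set w := fun τ => U t (V τ (f τ))
  have hw : Continuous w := (U t).continuous.comp hVf
  have hae : (fun τ => GreenT U V P Q t τ (f τ)) =ᵐ[volume]
      fun τ => U t (GreenT U V P Q 0 τ (f τ)) +
        ((Ioc 0 t).indicator w τ - (Ioc t 0).indicator w τ) := by
    filter_upwards [volume.ae_ne 0, volume.ae_ne t] with τ h0 ht
    exact greenT_apply_eq_add_indicator hU0 f h0 ht
  have hwint : ∀ a b : ℝ, Integrable ((Ioc a b).indicator w) := fun a b =>
    hw.integrableOn_Ioc.integrable_indicator measurableSet_Ioc
  rw [integral_congr_ae hae,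
    integral_add ((U t).integrable_comp (hint 0)) (by exact (hwint 0 t).sub (hwint t 0)),
    integral_sub (hwint _ _) (hwint _ _), MeasureTheory.integral_indicator measurableSet_Ioc,
    MeasureTheory.integral_indicator measurableSet_Ioc, map_add,
    ← (U t).integral_comp_comm (hint 0),
    ← (U t).intervalIntegral_comp_comm (hVf.intervalIntegrable 0 t)]
  -- `∫ τ in 0..t` is by definition the integral over `Ioc 0 t` minus the one over `Ioc t 0`
  rfl

end GreenFunction

section ExponentialKernel

variable {E F : Type*} [NormedAddCommGroup E] [NormedSpace ℝ E]
  [NormedAddCommGroup F] [NormedSpace ℝ F] {ν : ℝ}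

theorem integrable_exp_neg_mul_abs (hν : 0 < ν) : Integrable fun x : ℝ => exp (-ν * |x|) := by
  rw [← integrableOn_univ, ← Iic_union_Ioi (a := 0)]
  refine IntegrableOn.union ?_ ?_
  · refine (integrableOn_exp_mul_Iic hν 0).congr_fun (fun x hx => ?_) measurableSet_Iic
    simp only [abs_of_nonpos (mem_Iic.1 hx), neg_mul_neg]
  · refine (integrableOn_exp_mul_Ioi (neg_neg_of_pos hν) 0).congr_fun (fun x hx => ?_)
      measurableSet_Ioi
    rw [abs_of_pos hx]

theorem integral_exp_neg_mul_abs (hν : 0 < ν) : ∫ x : ℝ, exp (-ν * |x|) = 2 / ν := by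
  rw [integral_comp_abs (f := fun x => exp (-ν * x)), integral_exp_mul_Ioi (neg_neg_of_pos hν)]
  field_simp
  simp

variable {G : ℝ → E →L[ℝ] F} {f : ℝ → E} {N M t : ℝ}

theorem norm_apply_le_of_norm_le_exp (hG : ∀ τ, ‖G τ‖ ≤ N * exp (-ν * |t - τ|))
    (hM : ∀ τ, ‖f τ‖ ≤ M) (τ : ℝ) : ‖G τ (f τ)‖ ≤ N * M * exp (-ν * |t - τ|) :=
  calc ‖G τ (f τ)‖ ≤ N * exp (-ν * |t - τ|) * M :=
        (G τ).le_of_opNorm_le_of_le (hG τ) (hM τ)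
    _ = N * M * exp (-ν * |t - τ|) := by ring

theorem integrable_apply_of_norm_le_exp (hν : 0 < ν) (hGm : AEStronglyMeasurable G)
    (hG : ∀ τ, ‖G τ‖ ≤ N * exp (-ν * |t - τ|)) (hf : AEStronglyMeasurable f)
    (hM : ∀ τ, ‖f τ‖ ≤ M) : Integrable fun τ => G τ (f τ) :=
  (((integrable_exp_neg_mul_abs hν).comp_sub_left t).const_mul (N * M)).mono'
    ((ContinuousLinearMap.id ℝ _).aestronglyMeasurable_comp₂ hGm hf)
    (Eventually.of_forall (norm_apply_le_of_norm_le_exp hG hM))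

theorem norm_integral_apply_le_of_norm_le_exp (hν : 0 < ν)
    (hG : ∀ τ, ‖G τ‖ ≤ N * exp (-ν * |t - τ|)) (hM : ∀ τ, ‖f τ‖ ≤ M) :
    ‖∫ τ, G τ (f τ)‖ ≤ 2 * N / ν * M :=
  calc ‖∫ τ, G τ (f τ)‖ ≤ ∫ τ, N * M * exp (-ν * |t - τ|) :=
        norm_integral_le_of_norm_le
          (((integrable_exp_neg_mul_abs hν).comp_sub_left t).const_mul _)
          (Eventually.of_forall (norm_apply_le_of_norm_le_exp hG hM))
    _ = 2 * N / ν * M := by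
        rw [MeasureTheory.integral_const_mul, integral_sub_left_eq_self (fun x => exp (-ν * |x|)),
          integral_exp_neg_mul_abs hν]
        ring

end ExponentialKernel

theorem stmt10_general {E : Type*} [NormedAddCommGroup E] [NormedSpace ℝ E]
    [CompleteSpace E]
    (A U V : ℝ → E →L[ℝ] E)
    (hA : Continuous A) (hU0 : U 0 = 1)
    (hUV : ∀ t, U t ∘L V t = 1) (hVU : ∀ t, V t ∘L U t = 1)
    (hUderiv : ∀ (x : E) (t : ℝ), HasDerivAt (fun s => U s x) (A t (U t x)) t)
    (P Q : E →L[ℝ] E)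
    (N ν : ℝ) (hν : 0 < ν)
    (h1 : ∀ t τ : ℝ, 0 ≤ τ → τ ≤ t →
      ‖U t ∘L P ∘L V τ‖ ≤ N * exp (-ν * (t - τ)))
    (h2 : ∀ t τ : ℝ, t ≤ τ → 0 ≤ τ →
      ‖U t ∘L (1 - P) ∘L V τ‖ ≤ N * exp (-ν * (τ - t)))
    (h3 : ∀ t τ : ℝ, t ≤ τ → τ ≤ 0 →
      ‖U t ∘L Q ∘L V τ‖ ≤ N * exp (-ν * (τ - t)))
    (h4 : ∀ t τ : ℝ, τ ≤ t → τ ≤ 0 →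
      ‖U t ∘L (1 - Q) ∘L V τ‖ ≤ N * exp (-ν * (t - τ)))
    (f : ℝ → E) (hf : Continuous f) (M : ℝ) (hM : ∀ t, ‖f t‖ ≤ M) :
    (∀ t : ℝ, HasDerivAt (fun s : ℝ => ∫ τ : ℝ, GreenT U V P Q s τ (f τ))
        (A t (∫ τ : ℝ, GreenT U V P Q t τ (f τ)) + f t) t) ∧
      ∀ t : ℝ, ‖∫ τ : ℝ, GreenT U V P Q t τ (f τ)‖ ≤ 2 * N / ν * M := by
  have hV : Continuous V :=
    (continuous_of_hasDerivAt_apply hA hUderiv).inv_of_mul_eq_one hUV hVU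
  have hG := norm_greenT_le h1 h2 h3 h4
  have hint : ∀ t, Integrable fun τ => GreenT U V P Q t τ (f τ) := fun t =>
    integrable_apply_of_norm_le_exp hν (stronglyMeasurable_greenT hV t).aestronglyMeasurable
      (hG t) hf.aestronglyMeasurable hM
  refine ⟨fun t => ?_, fun t => norm_integral_apply_le_of_norm_le_exp hν (hG t) hM⟩
  have hVf : Continuous fun τ => V τ (f τ) := hV.clm_apply hf
  have hvar := integral_greenT_apply_eq hU0 hVf hint
  have hUVf : U t (V t (f t)) = f t := DFunLike.congr_fun (hUV t) (f t)
  have hderiv := (hasDerivAt_of_hasDerivAt_apply hA hUderiv t).clm_apply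
    ((hVf.integral_hasStrictDerivAt 0 t).hasDerivAt.const_add (∫ τ, GreenT U V P Q 0 τ (f τ)))
  rw [ContinuousLinearMap.comp_apply, ← hvar, hUVf] at hderiv
  exact hderiv.congr_of_eventuallyEq (Eventually.of_forall hvar)

/-- If `x' = A(t)x` has exponential trichotomy on `ℝ` with constants `N, ν`, then
for every bounded continuous `f`, `φ(t) = ∫_{-∞}^{∞} G(t,τ) f(τ) dτ` is a bounded
solution of `x' = A(t)x + f(t)` with `‖φ‖ ≤ (2N/ν)‖f‖`. -/
theorem stmt10 {E : Type*} [NormedAddCommGroup E] [NormedSpace ℝ E]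
    [CompleteSpace E]
    (A U V : ℝ → E →L[ℝ] E)
    (hA : Continuous A) (hU0 : U 0 = 1)
    (hUV : ∀ t, U t ∘L V t = 1) (hVU : ∀ t, V t ∘L U t = 1)
    (hUderiv : ∀ (x : E) (t : ℝ), HasDerivAt (fun s => U s x) (A t (U t x)) t)
    (P Q : E →L[ℝ] E)
    (hP : P ∘L P = P) (hQ : Q ∘L Q = Q)
    (hPQ : P ∘L Q = Q ∘L P) (hsum : P + Q - P ∘L Q = 1)
    (N ν : ℝ) (hN : 1 ≤ N) (hν : 0 < ν)
    (h1 : ∀ t τ : ℝ, 0 ≤ τ → τ ≤ t →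
      ‖U t ∘L P ∘L V τ‖ ≤ N * exp (-ν * (t - τ)))
    (h2 : ∀ t τ : ℝ, t ≤ τ → 0 ≤ τ →
      ‖U t ∘L (1 - P) ∘L V τ‖ ≤ N * exp (-ν * (τ - t)))
    (h3 : ∀ t τ : ℝ, t ≤ τ → τ ≤ 0 →
      ‖U t ∘L Q ∘L V τ‖ ≤ N * exp (-ν * (τ - t)))
    (h4 : ∀ t τ : ℝ, τ ≤ t → τ ≤ 0 →
      ‖U t ∘L (1 - Q) ∘L V τ‖ ≤ N * exp (-ν * (t - τ)))
    (f : ℝ → E) (hf : Continuous f) (M : ℝ) (hM : ∀ t, ‖f t‖ ≤ M) :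
    (∀ t : ℝ, HasDerivAt (fun s : ℝ => ∫ τ : ℝ, GreenT U V P Q s τ (f τ))
        (A t (∫ τ : ℝ, GreenT U V P Q t τ (f τ)) + f t) t) ∧
      ∀ t : ℝ, ‖∫ τ : ℝ, GreenT U V P Q t τ (f τ)‖ ≤ 2 * N / ν * M :=
  stmt10_general A U V hA hU0 hUV hVU hUderiv P Q N ν hν h1 h2 h3 h4 f hf M hM
end

section
/- Suppose the equation x' = A(t)x has an exponential dichotomy on ℝ₊ with projection P₊ and on ℝ₋ with projection P₋, satisfying P₊P₋ = P₋P₊ = P₋. Then, setting P := P₊ and Q := I − P₋, the equation has an exponential trichotomy on ℝ (with possibly modified constants). -/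
/-!
Since `P₊P₋ = P₋P₊ = P₋`, the projections `P₊` and `I - P₋` commute and `P + Q - PQ = I`.
For `t, τ` on one half-line the four estimates are those of the two dichotomies (with rate
`min ν₁ ν₂`). Across `0` one factors `U(t) S U(τ)⁻¹ = (U(t) R U(0)⁻¹)(U(0) S U(τ)⁻¹)` with
`RS = S`, namely `(R, S) = (P₊, P₋)` for `τ ≤ 0 < t` and `(I - P₋, I - P₊)` for `t < 0 ≤ τ`, and
multiplies a `ℝ₊`-estimate with a `ℝ₋`-estimate, which costs the constant `N₁N₂`.
-/

open Real

section Projections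

variable {R : Type*} [Ring R] {p q : R}

theorem commute_one_sub_of_mul_eq (hpq : p * q = q) (hqp : q * p = q) : Commute p (1 - q) := by
  rw [Commute, SemiconjBy, mul_sub, sub_mul, mul_one, one_mul, hpq, hqp]

theorem add_one_sub_sub_mul_one_sub_of_mul_eq (hpq : p * q = q) :
    p + (1 - q) - p * (1 - q) = 1 := by
  rw [mul_sub, mul_one, hpq]
  abel

theorem one_sub_mul_one_sub_of_mul_eq (hqp : q * p = q) : (1 - q) * (1 - p) = 1 - p := by
  rw [sub_mul, one_mul, mul_sub, mul_one, hqp]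
  abel

end Projections

theorem norm_le_mul_exp_of_le {α : Type*} [SeminormedAddCommGroup α] {a : α}
    {M N μ ν x : ℝ} (ha : ‖a‖ ≤ M * exp (-μ * x)) (hMN : M ≤ N) (hνμ : ν ≤ μ) (hx : 0 ≤ x) :
    ‖a‖ ≤ N * exp (-ν * x) := by
  have hN : 0 ≤ N := hMN.trans' (nonneg_of_mul_nonneg_left ((norm_nonneg a).trans ha) (exp_pos _))
  exact ha.trans (by gcongr)

section Evolution

variable {E : Type*} [NormedAddCommGroup E] [NormedSpace ℝ E]

theorem conj_comp_conj_eq {U V : ℝ → E →L[ℝ] E} {R S : E →L[ℝ] E} {s : ℝ}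
    (hVU : V s ∘L U s = 1) (hRS : R ∘L S = S) (t τ : ℝ) :
    (U t ∘L R ∘L V s) ∘L (U s ∘L S ∘L V τ) = U t ∘L S ∘L V τ := by
  change V s * U s = 1 at hVU
  change R * S = S at hRS
  change U t * (R * V s) * (U s * (S * V τ)) = U t * (S * V τ)
  simp only [mul_assoc]
  rw [← mul_assoc (V s), hVU, one_mul, ← mul_assoc R, hRS]

theorem norm_conj_le_of_factor {U V : ℝ → E →L[ℝ] E} {R S : E →L[ℝ] E}
    {s t τ M₁ M₂ μ₁ μ₂ ν x y : ℝ} (hVU : V s ∘L U s = 1) (hRS : R ∘L S = S)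
    (hR : ‖U t ∘L R ∘L V s‖ ≤ M₁ * exp (-μ₁ * x))
    (hS : ‖U s ∘L S ∘L V τ‖ ≤ M₂ * exp (-μ₂ * y))
    (hν₁ : ν ≤ μ₁) (hν₂ : ν ≤ μ₂) (hx : 0 ≤ x) (hy : 0 ≤ y) :
    ‖U t ∘L S ∘L V τ‖ ≤ M₁ * M₂ * exp (-ν * (x + y)) := by
  have hR' := norm_le_mul_exp_of_le hR le_rfl hν₁ hx
  have hS' := norm_le_mul_exp_of_le hS le_rfl hν₂ hy
  rw [← conj_comp_conj_eq hVU hRS]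
  calc _ ≤ ‖U t ∘L R ∘L V s‖ * ‖U s ∘L S ∘L V τ‖ := ContinuousLinearMap.opNorm_comp_le _ _
    _ ≤ M₁ * exp (-ν * x) * (M₂ * exp (-ν * y)) :=
        mul_le_mul hR' hS' (norm_nonneg _) ((norm_nonneg _).trans hR')
    _ = M₁ * M₂ * exp (-ν * (x + y)) := by rw [mul_add, exp_add]; ring

end Evolution

theorem stmt11_general {E : Type*} [NormedAddCommGroup E] [NormedSpace ℝ E]
    (U V : ℝ → E →L[ℝ] E)
    (hVU : ∀ t, V t ∘L U t = 1)
    (Pp Pm : E →L[ℝ] E)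
    (hc1 : Pp ∘L Pm = Pm) (hc2 : Pm ∘L Pp = Pm)
    (N₁ ν₁ : ℝ) (hN₁ : 1 ≤ N₁) (hν₁ : 0 < ν₁)
    (hd1 : ∀ t τ : ℝ, 0 ≤ τ → τ ≤ t →
      ‖U t ∘L Pp ∘L V τ‖ ≤ N₁ * exp (-ν₁ * (t - τ)))
    (hd2 : ∀ t τ : ℝ, 0 ≤ t → t ≤ τ →
      ‖U t ∘L (1 - Pp) ∘L V τ‖ ≤ N₁ * exp (ν₁ * (t - τ)))
    (N₂ ν₂ : ℝ) (hN₂ : 1 ≤ N₂) (hν₂ : 0 < ν₂)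
    (hd3 : ∀ t τ : ℝ, τ ≤ t → t ≤ 0 →
      ‖U t ∘L Pm ∘L V τ‖ ≤ N₂ * exp (-ν₂ * (t - τ)))
    (hd4 : ∀ t τ : ℝ, t ≤ τ → τ ≤ 0 →
      ‖U t ∘L (1 - Pm) ∘L V τ‖ ≤ N₂ * exp (ν₂ * (t - τ))) :
    (Pp ∘L (1 - Pm) = (1 - Pm) ∘L Pp) ∧
      (Pp + (1 - Pm) - Pp ∘L (1 - Pm) = 1) ∧
      ∃ N : ℝ, 1 ≤ N ∧ ∃ ν : ℝ, 0 < ν ∧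
        (∀ t τ : ℝ, 0 ≤ τ → τ ≤ t →
          ‖U t ∘L Pp ∘L V τ‖ ≤ N * exp (-ν * (t - τ))) ∧
        (∀ t τ : ℝ, t ≤ τ → 0 ≤ τ →
          ‖U t ∘L (1 - Pp) ∘L V τ‖ ≤ N * exp (-ν * (τ - t))) ∧
        (∀ t τ : ℝ, t ≤ τ → τ ≤ 0 →
          ‖U t ∘L (1 - Pm) ∘L V τ‖ ≤ N * exp (-ν * (τ - t))) ∧
        (∀ t τ : ℝ, τ ≤ t → τ ≤ 0 →
          ‖U t ∘L (1 - (1 - Pm)) ∘L V τ‖ ≤ N * exp (-ν * (t - τ))) := by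
  have hd2' t τ (ht : 0 ≤ t) (htτ : t ≤ τ) :
      ‖U t ∘L (1 - Pp) ∘L V τ‖ ≤ N₁ * exp (-ν₁ * (τ - t)) := by
    rw [neg_mul_comm, neg_sub]; exact hd2 t τ ht htτ
  have hd4' t τ (htτ : t ≤ τ) (hτ : τ ≤ 0) :
      ‖U t ∘L (1 - Pm) ∘L V τ‖ ≤ N₂ * exp (-ν₂ * (τ - t)) := by
    rw [neg_mul_comm, neg_sub]; exact hd4 t τ htτ hτ
  have hN₁N : N₁ ≤ N₁ * N₂ := le_mul_of_one_le_right (by linarith) hN₂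
  have hN₂N : N₂ ≤ N₁ * N₂ := le_mul_of_one_le_left (by linarith) hN₁
  have hν₁ν := min_le_left ν₁ ν₂
  have hν₂ν := min_le_right ν₁ ν₂
  refine ⟨commute_one_sub_of_mul_eq hc1 hc2, add_one_sub_sub_mul_one_sub_of_mul_eq hc1, N₁ * N₂,
    one_le_mul_of_one_le_of_one_le hN₁ hN₂, min ν₁ ν₂, lt_min hν₁ hν₂, ?_, ?_, ?_, ?_⟩
  · intro t τ hτ hτt
    exact norm_le_mul_exp_of_le (hd1 t τ hτ hτt) hN₁N hν₁ν (sub_nonneg.2 hτt)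
  · intro t τ htτ hτ
    rcases le_or_gt 0 t with ht | ht
    · exact norm_le_mul_exp_of_le (hd2' t τ ht htτ) hN₁N hν₁ν (sub_nonneg.2 htτ)
    · have h := norm_conj_le_of_factor (hVU 0) (one_sub_mul_one_sub_of_mul_eq hc2)
        (hd4' t 0 ht.le le_rfl) (hd2' 0 τ le_rfl hτ) hν₂ν hν₁ν (sub_nonneg.2 ht.le)
        (sub_nonneg.2 hτ)
      rwa [mul_comm N₂, sub_add_sub_cancel'] at h
  · intro t τ htτ hτ
    exact norm_le_mul_exp_of_le (hd4' t τ htτ hτ) hN₂N hν₂ν (sub_nonneg.2 htτ)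
  · intro t τ hτt hτ
    rw [sub_sub_cancel]
    rcases le_or_gt t 0 with ht | ht
    · exact norm_le_mul_exp_of_le (hd3 t τ hτt ht) hN₂N hν₂ν (sub_nonneg.2 hτt)
    · have h := norm_conj_le_of_factor (hVU 0) hc1 (hd1 t 0 le_rfl ht.le) (hd3 0 τ hτ le_rfl)
        hν₁ν hν₂ν (sub_nonneg.2 ht.le) (sub_nonneg.2 hτ)
      rwa [sub_add_sub_cancel] at h

/-- If `x' = A(t)x` has exponential dichotomies on `ℝ₊` (projection `P₊`) and on
`ℝ₋` (projection `P₋`) with `P₊P₋ = P₋P₊ = P₋`, then, with `P := P₊` and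
`Q := I - P₋`, it has an exponential trichotomy on `ℝ` (with possibly modified
constants). -/
theorem stmt11 {E : Type*} [NormedAddCommGroup E] [NormedSpace ℝ E]
    (A U V : ℝ → E →L[ℝ] E)
    (hA : Continuous A) (hU0 : U 0 = 1)
    (hUV : ∀ t, U t ∘L V t = 1) (hVU : ∀ t, V t ∘L U t = 1)
    (hUderiv : ∀ (x : E) (t : ℝ), HasDerivAt (fun s => U s x) (A t (U t x)) t)
    (Pp Pm : E →L[ℝ] E)
    (hPp : Pp ∘L Pp = Pp) (hPm : Pm ∘L Pm = Pm)
    (hc1 : Pp ∘L Pm = Pm) (hc2 : Pm ∘L Pp = Pm)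
    (N₁ ν₁ : ℝ) (hN₁ : 1 ≤ N₁) (hν₁ : 0 < ν₁)
    (hd1 : ∀ t τ : ℝ, 0 ≤ τ → τ ≤ t →
      ‖U t ∘L Pp ∘L V τ‖ ≤ N₁ * exp (-ν₁ * (t - τ)))
    (hd2 : ∀ t τ : ℝ, 0 ≤ t → t ≤ τ →
      ‖U t ∘L (1 - Pp) ∘L V τ‖ ≤ N₁ * exp (ν₁ * (t - τ)))
    (N₂ ν₂ : ℝ) (hN₂ : 1 ≤ N₂) (hν₂ : 0 < ν₂)
    (hd3 : ∀ t τ : ℝ, τ ≤ t → t ≤ 0 →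
      ‖U t ∘L Pm ∘L V τ‖ ≤ N₂ * exp (-ν₂ * (t - τ)))
    (hd4 : ∀ t τ : ℝ, t ≤ τ → τ ≤ 0 →
      ‖U t ∘L (1 - Pm) ∘L V τ‖ ≤ N₂ * exp (ν₂ * (t - τ))) :
    (Pp ∘L (1 - Pm) = (1 - Pm) ∘L Pp) ∧
      (Pp + (1 - Pm) - Pp ∘L (1 - Pm) = 1) ∧
      ∃ N : ℝ, 1 ≤ N ∧ ∃ ν : ℝ, 0 < ν ∧
        (∀ t τ : ℝ, 0 ≤ τ → τ ≤ t →
          ‖U t ∘L Pp ∘L V τ‖ ≤ N * exp (-ν * (t - τ))) ∧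
        (∀ t τ : ℝ, t ≤ τ → 0 ≤ τ →
          ‖U t ∘L (1 - Pp) ∘L V τ‖ ≤ N * exp (-ν * (τ - t))) ∧
        (∀ t τ : ℝ, t ≤ τ → τ ≤ 0 →
          ‖U t ∘L (1 - Pm) ∘L V τ‖ ≤ N * exp (-ν * (τ - t))) ∧
        (∀ t τ : ℝ, τ ≤ t → τ ≤ 0 →
          ‖U t ∘L (1 - (1 - Pm)) ∘L V τ‖ ≤ N * exp (-ν * (t - τ))) :=
  stmt11_general U V hVU Pp Pm hc1 hc2 N₁ ν₁ hN₁ hν₁ hd1 hd2 N₂ ν₂ hN₂ hν₂ hd3 hd4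
end
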